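/- arXiv:2107.13730 — 6 statements merged into one kernel-verified Lean document; each statement's English description precedes it below -/
import Mathlib

section
/- Let X be a separable Banach space and C ⊆ X a closed convex set. Suppose (z_n*) ⊂ X* and (γ_n) ⊂ ℝ are sequences such that C = ⋂_{n∈ℕ} { u ∈ X : ⟨z_n*, u⟩ ≤ γ_n }. Define ξ_n := 1 + ‖z_n*‖ + |γ_n| and φ(y) := ∑_{n∈ℕ} 2^{-n} ξ_n^{-1} θ(ξ_n^{-1}(⟨z_n*, y⟩ - γ_n)), where θ : ℝ → [0,∞) is a nondecreasing convex function with θ(s)=0 iff s ≤ 0 and θ(s) ≤ s + 1 for all s. Then φ is well-defined (the series converges), φ is convex, nonnegative, and C = { y ∈ X : φ(y) = 0 }. -/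
/-!
Each summand is a nonnegative multiple of `θ` composed with an affine function of `y`, hence
convex and nonnegative, and a pointwise convergent series of convex functions is convex.
The normalisation by `ξₙ` makes the `n`-th summand at most `2⁻ⁿ (‖y‖ + 2)`, which gives
convergence. Finally a convergent series of nonnegative terms vanishes iff every term does, and
the `n`-th term vanishes iff `⟨zₙ*, y⟩ ≤ γₙ`, because `θ` vanishes exactly on `(-∞, 0]`.
-/

open Set

theorem convexOn_tsum {ι E : Type*} [AddCommGroup E] [Module ℝ E] {s : Set E}
    {f : ι → E → ℝ} (hs : Convex ℝ s) (hf : ∀ i, ConvexOn ℝ s (f i))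
    (hsum : ∀ x ∈ s, Summable fun i => f i x) : ConvexOn ℝ s fun x => ∑' i, f i x := by
  refine ⟨hs, fun x hx y hy a b ha hb hab => ?_⟩
  have hsumx := (hsum x hx).mul_left a
  have hsumy := (hsum y hy).mul_left b
  calc ∑' i, f i (a • x + b • y) ≤ ∑' i, (a * f i x + b * f i y) :=
        (hsum _ (hs hx hy ha hb hab)).tsum_le_tsum (fun i => (hf i).2 hx hy ha hb hab)
          (hsumx.add hsumy)
    _ = a • ∑' i, f i x + b • ∑' i, f i y := by
        rw [hsumx.tsum_add hsumy, tsum_mul_left, tsum_mul_left, smul_eq_mul, smul_eq_mul]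

theorem tsum_eq_zero_iff_of_nonneg {ι : Type*} {f : ι → ℝ} (hf : Summable f)
    (h : ∀ i, 0 ≤ f i) : ∑' i, f i = 0 ↔ ∀ i, f i = 0 := by
  rw [← hf.hasSum_iff, hasSum_zero_iff_of_nonneg h, funext_iff]
  rfl

theorem ConvexOn.comp_mul_sub_linearMap {X : Type*} [AddCommGroup X] [Module ℝ X]
    {θ : ℝ → ℝ} (hθ : ConvexOn ℝ univ θ) (f : X →ₗ[ℝ] ℝ) (w c : ℝ) :
    ConvexOn ℝ univ fun y => θ (w * (f y - c)) := by
  simpa [Function.comp_def, mul_sub] using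
    hθ.comp_affineMap ((w • f).toAffineMap - AffineMap.const ℝ X (w * c))

theorem ContinuousLinearMap.apply_sub_le_mul {X : Type*} [SeminormedAddCommGroup X]
    [NormedSpace ℝ X] (f : X →L[ℝ] ℝ) (c : ℝ) (y : X) :
    f y - c ≤ (1 + ‖f‖ + |c|) * (‖y‖ + 1) := by
  have hfy : f y ≤ ‖f‖ * ‖y‖ := (le_abs_self _).trans (f.le_opNorm y)
  nlinarith [neg_le_abs c, norm_nonneg f, norm_nonneg y, abs_nonneg c]

section Penalty

variable {X : Type*} [SeminormedAddCommGroup X] [NormedSpace ℝ X] {θ : ℝ → ℝ}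

theorem inv_mul_penalty_le (hθnonneg : ∀ s, 0 ≤ θ s) (hθgrowth : ∀ s, θ s ≤ s + 1)
    (f : X →L[ℝ] ℝ) (c : ℝ) (y : X) :
    (1 + ‖f‖ + |c|)⁻¹ * θ ((1 + ‖f‖ + |c|)⁻¹ * (f y - c)) ≤ ‖y‖ + 2 := by
  have hξ : 1 ≤ 1 + ‖f‖ + |c| := by have := abs_nonneg c; have := norm_nonneg f; linarith
  have harg : (1 + ‖f‖ + |c|)⁻¹ * (f y - c) ≤ ‖y‖ + 1 := by
    rw [inv_mul_le_iff₀ (by linarith)]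
    exact f.apply_sub_le_mul c y
  calc (1 + ‖f‖ + |c|)⁻¹ * θ ((1 + ‖f‖ + |c|)⁻¹ * (f y - c))
      ≤ 1 * (‖y‖ + 2) :=
        mul_le_mul (inv_le_one_of_one_le₀ hξ) ((hθgrowth _).trans (by linarith)) (hθnonneg _)
          zero_le_one
    _ = ‖y‖ + 2 := one_mul _

theorem geometric_penalty_nonneg (hθnonneg : ∀ s, 0 ≤ θ s) (f : X →L[ℝ] ℝ) (c : ℝ) (y : X)
    (n : ℕ) : 0 ≤ ((1 : ℝ) / 2) ^ n * (1 + ‖f‖ + |c|)⁻¹ * θ ((1 + ‖f‖ + |c|)⁻¹ * (f y - c)) := by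
  have := hθnonneg ((1 + ‖f‖ + |c|)⁻¹ * (f y - c))
  positivity

theorem summable_geometric_penalty (hθnonneg : ∀ s, 0 ≤ θ s) (hθgrowth : ∀ s, θ s ≤ s + 1)
    (z : ℕ → X →L[ℝ] ℝ) (γ : ℕ → ℝ) (y : X) :
    Summable fun n => ((1 : ℝ) / 2) ^ n * (1 + ‖z n‖ + |γ n|)⁻¹ *
      θ ((1 + ‖z n‖ + |γ n|)⁻¹ * (z n y - γ n)) := by
  refine Summable.of_nonneg_of_le
    (fun n => geometric_penalty_nonneg hθnonneg (z n) (γ n) y n) (fun n => ?_)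
    (summable_geometric_two.mul_right (‖y‖ + 2))
  rw [mul_assoc, one_div, inv_pow]
  exact mul_le_mul_of_nonneg_left (inv_mul_penalty_le hθnonneg hθgrowth (z n) (γ n) y)
    (by positivity)

end Penalty

theorem mul_apply_mul_eq_zero_iff {θ : ℝ → ℝ} (hθzero : ∀ s, θ s = 0 ↔ s ≤ 0) {k w t : ℝ}
    (hk : 0 < k) (hw : 0 < w) : k * θ (w * t) = 0 ↔ t ≤ 0 := by
  rw [mul_eq_zero, hθzero, or_iff_right hk.ne', ← smul_eq_mul,
    smul_nonpos_iff_nonpos_of_pos_left hw]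

theorem stmt5_general {X : Type*} [NormedAddCommGroup X] [NormedSpace ℝ X]
    (C : Set X)
    (z : ℕ → X →L[ℝ] ℝ) (γ : ℕ → ℝ)
    (hC : C = ⋂ n : ℕ, {u : X | z n u ≤ γ n})
    (θ : ℝ → ℝ)
    (hθnonneg : ∀ s : ℝ, 0 ≤ θ s)
    (hθconv : ConvexOn ℝ Set.univ θ)
    (hθzero : ∀ s : ℝ, θ s = 0 ↔ s ≤ 0)
    (hθgrowth : ∀ s : ℝ, θ s ≤ s + 1)
    (ξ : ℕ → ℝ) (hξ : ∀ n, ξ n = 1 + ‖z n‖ + |γ n|)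
    (φ : X → ℝ)
    (hφ : φ = fun y => ∑' n : ℕ, ((1 : ℝ) / 2) ^ n * (ξ n)⁻¹ * θ ((ξ n)⁻¹ * (z n y - γ n))) :
    (∀ y : X,
        Summable (fun n : ℕ => ((1 : ℝ) / 2) ^ n * (ξ n)⁻¹ * θ ((ξ n)⁻¹ * (z n y - γ n)))) ∧
    ConvexOn ℝ Set.univ φ ∧ (∀ y : X, 0 ≤ φ y) ∧ C = {y : X | φ y = 0} := by
  obtain rfl : ξ = fun n => 1 + ‖z n‖ + |γ n| := funext hξ
  subst hφ hC
  have hsum := summable_geometric_penalty hθnonneg hθgrowth z γ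
  have hterm_nonneg (y : X) (n : ℕ) := geometric_penalty_nonneg hθnonneg (z n) (γ n) y n
  refine ⟨hsum, convexOn_tsum convex_univ (fun n => ?_) (fun y _ => hsum y),
    fun y => tsum_nonneg (hterm_nonneg y), ?_⟩
  · exact (hθconv.comp_mul_sub_linearMap (z n : X →ₗ[ℝ] ℝ) _ (γ n)).smul
      (c := ((1 : ℝ) / 2) ^ n * (1 + ‖z n‖ + |γ n|)⁻¹) (by positivity)
  · ext y
    simp only [mem_iInter, mem_ofPred_eq, tsum_eq_zero_iff_of_nonneg (hsum y) (hterm_nonneg y)]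
    refine forall_congr' fun n => ?_
    rw [mul_apply_mul_eq_zero_iff hθzero (by positivity) (by positivity), sub_nonpos]

/-- If a closed convex set `C` in a separable Banach space is a countable intersection of
half-spaces `{u : ⟨zₙ*, u⟩ ≤ γₙ}`, and `θ : ℝ → [0,∞)` is nondecreasing, convex, vanishes
exactly on `(-∞,0]` and satisfies `θ s ≤ s + 1`, then the series
`φ(y) = ∑ₙ 2⁻ⁿ ξₙ⁻¹ θ(ξₙ⁻¹(⟨zₙ*, y⟩ - γₙ))` with `ξₙ = 1 + ‖zₙ*‖ + |γₙ|`
converges, `φ` is convex and nonnegative, and `C = {y : φ y = 0}`. -/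
theorem stmt5 {X : Type*} [NormedAddCommGroup X] [NormedSpace ℝ X] [CompleteSpace X]
    [TopologicalSpace.SeparableSpace X]
    (C : Set X) (hCclosed : IsClosed C) (hCconv : Convex ℝ C)
    (z : ℕ → X →L[ℝ] ℝ) (γ : ℕ → ℝ)
    (hC : C = ⋂ n : ℕ, {u : X | z n u ≤ γ n})
    (θ : ℝ → ℝ)
    (hθnonneg : ∀ s : ℝ, 0 ≤ θ s)
    (hθmono : Monotone θ) (hθconv : ConvexOn ℝ Set.univ θ)
    (hθzero : ∀ s : ℝ, θ s = 0 ↔ s ≤ 0)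
    (hθgrowth : ∀ s : ℝ, θ s ≤ s + 1)
    (ξ : ℕ → ℝ) (hξ : ∀ n, ξ n = 1 + ‖z n‖ + |γ n|)
    (φ : X → ℝ)
    (hφ : φ = fun y => ∑' n : ℕ, ((1 : ℝ) / 2) ^ n * (ξ n)⁻¹ * θ ((ξ n)⁻¹ * (z n y - γ n))) :
    (∀ y : X,
        Summable (fun n : ℕ => ((1 : ℝ) / 2) ^ n * (ξ n)⁻¹ * θ ((ξ n)⁻¹ * (z n y - γ n)))) ∧
    ConvexOn ℝ Set.univ φ ∧ (∀ y : X, 0 ≤ φ y) ∧ C = {y : X | φ y = 0} :=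
  stmt5_general C z γ hC θ hθnonneg hθconv hθzero hθgrowth ξ hξ φ hφ
end

section
/- Let H be a Hilbert space, θ : ℝ → ℝ be a convex, nondecreasing, L-Lipschitz function, x* ∈ H and β ∈ ℝ. Then the function x ↦ θ(⟨x*, x⟩ - (1/2)‖x‖² - β) + (L/2)‖x‖² is convex on H. -/
/-!
Write the argument of `θ` as `ℓ - q` with `ℓ` affine and `q = ½‖·‖²` convex. Along a convex
combination `z = a • x + b • y`, the argument at `z` exceeds the combination of the arguments at `x`
and `y` by exactly the convexity defect `d = a q x + b q y - q z ≥ 0`. The Lipschitz bound charges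
this excess at most `L d`, which the term `L q` pays back.
-/

open scoped RealInnerProductSpace

open Set

theorem LipschitzWith.apply_add_le {θ : ℝ → ℝ} {L : NNReal} (hθ : LipschitzWith L θ) (u : ℝ)
    {d : ℝ} (hd : 0 ≤ d) : θ (u + d) ≤ θ u + L * d := by
  simpa [Real.dist_eq, abs_of_nonneg hd] using hθ.le_add_mul (u + d) u

theorem ConvexOn.comp_affine_sub_add_mul {E : Type*} [AddCommGroup E] [Module ℝ E] {s : Set E}
    {θ : ℝ → ℝ} {L : NNReal} {q : E → ℝ} (hθ : ConvexOn ℝ univ θ) (hθL : LipschitzWith L θ)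
    (ℓ : E →ᵃ[ℝ] ℝ) (hq : ConvexOn ℝ s q) :
    ConvexOn ℝ s fun x => θ (ℓ x - q x) + L * q x := by
  refine ⟨hq.1, fun x hx y hy a b ha hb hab => ?_⟩
  set z := a • x + b • y
  set d := a * q x + b * q y - q z
  have hd : 0 ≤ d := sub_nonneg.2 (hq.2 hx hy ha hb hab)
  have hz : ℓ z - q z = a * (ℓ x - q x) + b * (ℓ y - q y) + d := by
    rw [Convex.combo_affine_apply hab]
    simp only [d, smul_eq_mul]
    ring
  simp only [smul_eq_mul]
  calc θ (ℓ z - q z) + L * q z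
      ≤ θ (a * (ℓ x - q x) + b * (ℓ y - q y)) + L * d + L * q z := by
        rw [hz]; gcongr; exact hθL.apply_add_le _ hd
    _ ≤ a * θ (ℓ x - q x) + b * θ (ℓ y - q y) + L * d + L * q z := by
        gcongr; exact hθ.2 (mem_univ _) (mem_univ _) ha hb hab
    _ = a * (θ (ℓ x - q x) + L * q x) + b * (θ (ℓ y - q y) + L * q y) := by ring

theorem convexOn_univ_half_norm_sq {E : Type*} [SeminormedAddCommGroup E] [NormedSpace ℝ E] :
    ConvexOn ℝ univ fun x : E => (1 / 2 : ℝ) * ‖x‖ ^ 2 :=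
  ((convexOn_norm convex_univ).pow (fun _ _ => norm_nonneg _) 2).smul (by norm_num)

theorem stmt7_general {H : Type*} [NormedAddCommGroup H] [InnerProductSpace ℝ H]
    (θ : ℝ → ℝ) (L : NNReal)
    (hθconv : ConvexOn ℝ Set.univ θ)
    (hθlip : LipschitzWith L θ)
    (xs : H) (β : ℝ) :
    ConvexOn ℝ Set.univ
      (fun x : H => θ (⟪xs, x⟫ - (1 / 2) * ‖x‖ ^ 2 - β) + ((L : ℝ) / 2) * ‖x‖ ^ 2) := by
  let ℓ : H →ᵃ[ℝ] ℝ := (innerₛₗ ℝ xs).toAffineMap - AffineMap.const ℝ H β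
  convert hθconv.comp_affine_sub_add_mul hθlip ℓ convexOn_univ_half_norm_sq using 2 with x
  simp only [ℓ, AffineMap.coe_sub, LinearMap.coe_toAffineMap, coe_innerₛₗ_apply,
    AffineMap.coe_const, Pi.sub_apply, Function.const_apply]
  ring_nf

/-- If `θ : ℝ → ℝ` is convex, nondecreasing and `L`-Lipschitz, `x* ∈ H`, `β ∈ ℝ`, then
`x ↦ θ(⟨x*, x⟩ - (1/2)‖x‖² - β) + (L/2)‖x‖²` is convex on the Hilbert space `H`. -/
theorem stmt7 {H : Type*} [NormedAddCommGroup H] [InnerProductSpace ℝ H] [CompleteSpace H]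
    (θ : ℝ → ℝ) (L : NNReal)
    (hθconv : ConvexOn ℝ Set.univ θ) (hθmono : Monotone θ)
    (hθlip : LipschitzWith L θ)
    (xs : H) (β : ℝ) :
    ConvexOn ℝ Set.univ
      (fun x : H => θ (⟪xs, x⟫ - (1 / 2) * ‖x‖ ^ 2 - β) + ((L : ℝ) / 2) * ‖x‖ ^ 2) :=
  stmt7_general θ L hθconv hθlip xs β
end

section
/- Define M : ℝ ⇉ ℝ² by M(t) = t(1,0) + C where C = { (x,y) ∈ ℝ² : xy ≥ 1, x ≥ 0 }. Then M is pseudo-norm-weak upper semicontinuous at every point, but M is not upper semicontinuous (in the standard sense) at t = 0. -/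
/-!
Translating `C` by `t • v` shifts every value of a linear functional `f` by the same amount
`t * f v`, so a strict bound of `f` on `M t` survives, up to any `η > 0`, for `t'` close to `t`.
Standard upper semicontinuity fails at `0` because the
open half-plane `{x > 0}` contains `C = M 0`, yet for every `t < 0` the hyperbola branch of `C`
reaches points with `x < -t`, which `M t` moves to the left of the axis.
-/

theorem LinearMap.exists_forall_lt_add_on_translates {E : Type*} [AddCommGroup E] [Module ℝ E]
    (f : E →ₗ[ℝ] ℝ) (C : Set E) (v : E) {t α η : ℝ} (hα : ∀ u ∈ C, f (t • v + u) < α)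
    (hη : 0 < η) : ∃ ε > 0, ∀ t', |t' - t| < ε → ∀ u ∈ C, f (t' • v + u) < α + η := by
  have hshift : ∀ t' u, f (t' • v + u) = f (t • v + u) + (t' - t) * f v := fun t' u => by
    simp only [map_add, map_smul, smul_eq_mul]; ring
  have hcont : Continuous fun t' : ℝ => (t' - t) * f v := by fun_prop
  obtain ⟨ε, hε, hsmall⟩ :=
    Metric.eventually_nhds_iff.1 (hcont.tendsto t |>.eventually (gt_mem_nhds (by simpa using hη)))
  refine ⟨ε, hε, fun t' ht' u hu => ?_⟩
  rw [hshift]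
  linarith [hα u hu, hsmall (show dist t' t < ε from ht')]

theorem pos_of_one_le_mul_of_nonneg {x y : ℝ} (h : 1 ≤ x * y) (hx : 0 ≤ x) : 0 < x :=
  hx.lt_of_ne fun hx0 => by simp [← hx0] at h; linarith

/-- The multifunction `M(t) = t(1,0) + C` with `C = {(x,y) : xy ≥ 1, x ≥ 0}` is
pseudo-norm-weak upper semicontinuous at every point, but not upper semicontinuous in the
standard sense at `t = 0`. -/
theorem stmt11
    (C : Set (ℝ × ℝ)) (hC : C = {p : ℝ × ℝ | 1 ≤ p.1 * p.2 ∧ 0 ≤ p.1})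
    (M : ℝ → Set (ℝ × ℝ)) (hM : M = fun t => (fun p : ℝ × ℝ => ((t, 0) : ℝ × ℝ) + p) '' C) :
    (∀ (t : ℝ) (y' : (ℝ × ℝ) →L[ℝ] ℝ) (α : ℝ),
        (∀ u ∈ M t, y' u < α) → ∀ η > (0 : ℝ), ∃ ε > (0 : ℝ),
          ∀ t' : ℝ, |t' - t| < ε → ∀ u ∈ M t', y' u < α + η) ∧
    ¬ (∀ O : Set (ℝ × ℝ), IsOpen O → M 0 ⊆ O → ∃ ε > (0 : ℝ),
          ∀ t' : ℝ, |t'| < ε → M t' ⊆ O) := by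
  subst hM
  refine ⟨fun t y' α hα η hη => ?_, fun husc => ?_⟩
  · have hsmul : ∀ s : ℝ, s • ((1 : ℝ), (0 : ℝ)) = (s, 0) := by simp
    simp only [Set.forall_mem_image] at hα ⊢
    simpa only [hsmul, ContinuousLinearMap.coe_coe] using
      (y' : ℝ × ℝ →ₗ[ℝ] ℝ).exists_forall_lt_add_on_translates C ((1 : ℝ), (0 : ℝ)) (t := t)
        (by simpa only [hsmul, ContinuousLinearMap.coe_coe] using hα) hη
  · obtain ⟨ε, hε, hM⟩ := husc {p | 0 < p.1} (isOpen_lt continuous_const continuous_fst) <| by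
      rintro _ ⟨p, hp, rfl⟩
      rw [hC] at hp
      simpa using pos_of_one_le_mul_of_nonneg hp.1 hp.2
    have hp : ((ε / 4, 4 / ε) : ℝ × ℝ) ∈ C := by
      rw [hC]
      exact ⟨by field_simp; rfl, by positivity⟩
    have hleft := hM (-(ε / 2)) (by rw [abs_neg, abs_of_pos (by positivity)]; linarith) ⟨_, hp, rfl⟩
    simp only [Set.mem_ofPred_eq, Prod.fst_add] at hleft
    linarith
end

section
/- Let X, Y be Banach spaces and f : X × Y → ℝ with f(x, ·) convex for each x, and define f*(x, y*) := sup_{y ∈ Y} (⟨y*, y⟩ - f(x,y)). If f is uniformly continuous on X × Y, then for every y* ∈ Y*, the map x ↦ f*(x, y*) is upper semicontinuous (taking values in ℝ ∪ {+∞}). -/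
/-!
Uniform continuity of `f` makes the maps `x ↦ y* y - f (x, y)`, indexed by `y`, equicontinuous,
and the pointwise supremum of an equicontinuous family of real functions is upper semicontinuous
as an `EReal`-valued function: near `x` every member exceeds its value at `x` by less than `ε`.
-/

open Filter

theorem UniformContinuous.uniformEquicontinuous_swap_curry {α β γ : Type*} [UniformSpace α]
    [UniformSpace β] [UniformSpace γ] {f : α × β → γ} (hf : UniformContinuous f) :
    UniformEquicontinuous (fun b a => f (a, b)) := by
  intro U hU
  obtain ⟨pa, hpa, pb, hpb, hp⟩ := eventually_prod_iff.mp <|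
    eventually_map.mp (uniformity_prod_eq_prod (α := α) (β := β) ▸ hf hU)
  filter_upwards [hpa] with a ha b
  exact hp ha (refl_mem_uniformity hpb)

theorem EquicontinuousAt.const_sub {ι X : Type*} [TopologicalSpace X] {G : ι → X → ℝ} {x : X}
    (hG : EquicontinuousAt G x) (a : ι → ℝ) : EquicontinuousAt (fun i x => a i - G i x) x := by
  rw [Metric.equicontinuousAt_iff_right] at hG ⊢
  simpa only [dist_sub_left] using hG

theorem EquicontinuousAt.upperSemicontinuousAt_iSup_coe {ι X : Type*} [TopologicalSpace X]
    {F : ι → X → ℝ} {x : X} (hF : EquicontinuousAt F x) :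
    UpperSemicontinuousAt (fun x => ⨆ i, (F i x : EReal)) x := by
  intro c hc
  obtain ⟨r, hxr, hrc⟩ := EReal.lt_iff_exists_real_btwn.mp hc
  obtain ⟨s, hrs, hsc⟩ := EReal.lt_iff_exists_real_btwn.mp hrc
  replace hrs : r < s := EReal.coe_lt_coe_iff.mp hrs
  filter_upwards [Metric.equicontinuousAt_iff_right.mp hF (s - r) (sub_pos.mpr hrs)] with x' hx'
  refine lt_of_le_of_lt (iSup_le fun i => EReal.coe_le_coe_iff.mpr ?_) hsc
  have hi : F i x < r :=
    EReal.coe_lt_coe_iff.mp ((le_iSup (fun i => (F i x : EReal)) i).trans_lt hxr)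
  have := (abs_lt.mp (Real.dist_eq _ _ ▸ hx' i)).1
  linarith

theorem stmt12_general {X Y : Type*} [NormedAddCommGroup X]
    [NormedAddCommGroup Y] [NormedSpace ℝ Y]
    (f : X × Y → ℝ)
    (hunif : UniformContinuous f) :
    ∀ y' : Y →L[ℝ] ℝ,
      UpperSemicontinuous (fun x : X => ⨆ y : Y, ((y' y - f (x, y) : ℝ) : EReal)) :=
  fun y' x => EquicontinuousAt.upperSemicontinuousAt_iSup_coe <|
    (hunif.uniformEquicontinuous_swap_curry.equicontinuous x).const_sub y'

/-- If `f : X × Y → ℝ` is uniformly continuous and `f(x, ·)` is convex for each `x`, then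
for every `y* ∈ Y*` the partial Fenchel conjugate `x ↦ f*(x, y*) = sup_y (⟨y*,y⟩ - f(x,y))`
(with values in `ℝ ∪ {+∞}`) is upper semicontinuous. -/
theorem stmt12 {X Y : Type*} [NormedAddCommGroup X] [NormedSpace ℝ X] [CompleteSpace X]
    [NormedAddCommGroup Y] [NormedSpace ℝ Y] [CompleteSpace Y]
    (f : X × Y → ℝ)
    (hconv : ∀ x : X, ConvexOn ℝ Set.univ (fun y : Y => f (x, y)))
    (hunif : UniformContinuous f) :
    ∀ y' : Y →L[ℝ] ℝ,
      UpperSemicontinuous (fun x : X => ⨆ y : Y, ((y' y - f (x, y) : ℝ) : EReal)) :=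
  stmt12_general f hunif
end

section
/- Let X be a reflexive Banach space and f : H × X → ℝ (H a Hilbert space) such that: (i) f is sequentially lower semicontinuous with respect to strong convergence in H and weak convergence in X; (ii) for each x ∈ H there exist δ > 0, α > 0, β ∈ ℝ with f(x', y) ≥ α‖y‖² + β for all x' ∈ B_δ(x) and y ∈ X. Then for every y* ∈ X*, the map x ↦ f*(x, y*) := sup_y (⟨y*,y⟩ - f(x,y)) is finite-valued and upper semicontinuous on H. -/
/-!
Finiteness: coercivity gives `g y - f (x, y) ≤ ‖g‖ ‖y‖ - α ‖y‖² - β ≤ ‖g‖² / (4α) - β`.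

Upper semicontinuity is checked along sequences. If `x n → x₀` and `b < f*(x n, g)` for all `n`,
pick `y n` with `b < g (y n) - f (x n, y n)`. Coercivity, uniform on a ball around `x₀`, bounds
`‖y n‖`, so by reflexivity a subsequence converges weakly to some `y₀`, and lower semicontinuity
gives `f (x₀, y₀) ≤ liminf (g (y n) - b) = g y₀ - b`, i.e. `b ≤ f*(x₀, g)`.
-/

open Filter Topology

lemma mul_sub_mul_sq_le_sq_div {a t α : ℝ} (hα : 0 < α) : a * t - α * t ^ 2 ≤ a ^ 2 / (4 * α) := by
  rw [le_div_iff₀ (by positivity)]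
  nlinarith [sq_nonneg (2 * α * t - a)]

lemma le_max_one_div_of_mul_sq_le {a t α D : ℝ} (hα : 0 < α) (h : α * t ^ 2 ≤ a * t + D) :
    t ≤ max 1 ((a + |D|) / α) := by
  rcases le_or_gt t 1 with ht | ht
  · exact ht.trans (le_max_left _ _)
  · refine le_max_of_le_right ?_
    rw [le_div_iff₀ hα]
    nlinarith [le_abs_self D, abs_nonneg D]

lemma ContinuousLinearMap.apply_le_opNorm_mul_norm {X : Type*} [SeminormedAddCommGroup X]
    [NormedSpace ℝ X] (g : X →L[ℝ] ℝ) (y : X) : g y ≤ ‖g‖ * ‖y‖ :=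
  (Real.le_norm_self _).trans (g.le_opNorm y)

section PartialConjugate

variable {H X : Type*} [NormedAddCommGroup X] [NormedSpace ℝ X]

noncomputable def partialConj (f : H × X → ℝ) (g : X →L[ℝ] ℝ) (x : H) : EReal :=
  ⨆ y : X, ((g y - f (x, y) : ℝ) : EReal)

def WeakSeqTendsto (y : ℕ → X) (y₀ : X) : Prop :=
  ∀ g : X →L[ℝ] ℝ, Tendsto (fun n => g (y n)) atTop (𝓝 (g y₀))

variable {f : H × X → ℝ}

lemma partialConj_lt_top {x : H} {α β : ℝ} (hα : 0 < α)
    (hcoer : ∀ y, α * ‖y‖ ^ 2 + β ≤ f (x, y)) (g : X →L[ℝ] ℝ) :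
    partialConj f g x < ⊤ := by
  refine (iSup_le fun y => ?_).trans_lt (EReal.coe_lt_top (‖g‖ ^ 2 / (4 * α) - β))
  have := mul_sub_mul_sq_le_sq_div (a := ‖g‖) (t := ‖y‖) hα
  have := g.apply_le_opNorm_mul_norm y
  have := hcoer y
  exact EReal.coe_le_coe_iff.2 (by linarith)

lemma coe_le_partialConj_of_tendsto [PseudoMetricSpace H]
    (hrefl : ∀ y : ℕ → X, (∃ c : ℝ, ∀ n, ‖y n‖ ≤ c) →
      ∃ (y₀ : X) (σ : ℕ → ℕ), StrictMono σ ∧ WeakSeqTendsto (y ∘ σ) y₀)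
    (hlsc : ∀ (x : ℕ → H) (x₀ : H) (y : ℕ → X) (y₀ : X), Tendsto x atTop (𝓝 x₀) →
      WeakSeqTendsto y y₀ → f (x₀, y₀) ≤ liminf (fun n => f (x n, y n)) atTop)
    {g : X →L[ℝ] ℝ} {x : ℕ → H} {x₀ : H} (hx : Tendsto x atTop (𝓝 x₀)) {α β : ℝ} (hα : 0 < α)
    (hcoer : ∀ n y, α * ‖y‖ ^ 2 + β ≤ f (x n, y)) {b : ℝ}
    (hb : ∀ n, (b : EReal) < partialConj f g (x n)) :
    (b : EReal) ≤ partialConj f g x₀ := by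
  have hy : ∀ n, ∃ y, b < g y - f (x n, y) := fun n => by
    obtain ⟨y, hy⟩ := lt_iSup_iff.1 (hb n)
    exact ⟨y, EReal.coe_lt_coe_iff.1 hy⟩
  choose y hy using hy
  have hy_bdd : ∀ n, ‖y n‖ ≤ max 1 ((‖g‖ + |-β - b|) / α) := fun n => by
    have := g.apply_le_opNorm_mul_norm (y n)
    have := hcoer n (y n)
    exact le_max_one_div_of_mul_sq_le hα (by linarith [hy n])
  obtain ⟨y₀, σ, hσ, hyσ⟩ := hrefl y ⟨_, hy_bdd⟩
  have hgσ : Tendsto (fun n => g (y (σ n)) - b) atTop (𝓝 (g y₀ - b)) := (hyσ g).sub_const b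
  have hf_bdd : IsBoundedUnder (· ≥ ·) atTop (fun n => f (x (σ n), y (σ n))) :=
    isBoundedUnder_of ⟨β, fun n => by nlinarith [hcoer (σ n) (y (σ n)), sq_nonneg ‖y (σ n)‖]⟩
  have hf_le : f (x₀, y₀) ≤ g y₀ - b :=
    calc f (x₀, y₀) ≤ liminf (fun n => f (x (σ n), y (σ n))) atTop :=
          hlsc _ x₀ _ y₀ (hx.comp hσ.tendsto_atTop) hyσ
      _ ≤ liminf (fun n => g (y (σ n)) - b) atTop :=
          liminf_le_liminf (Eventually.of_forall fun n => by linarith [hy (σ n)]) hf_bdd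
            hgσ.isBoundedUnder_le.isCoboundedUnder_ge
      _ = g y₀ - b := hgσ.liminf_eq
  exact le_iSup_of_le y₀ (EReal.coe_le_coe_iff.2 (by linarith))

theorem upperSemicontinuous_partialConj [PseudoMetricSpace H]
    (hrefl : ∀ y : ℕ → X, (∃ c : ℝ, ∀ n, ‖y n‖ ≤ c) →
      ∃ (y₀ : X) (σ : ℕ → ℕ), StrictMono σ ∧ WeakSeqTendsto (y ∘ σ) y₀)
    (hlsc : ∀ (x : ℕ → H) (x₀ : H) (y : ℕ → X) (y₀ : X), Tendsto x atTop (𝓝 x₀) →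
      WeakSeqTendsto y y₀ → f (x₀, y₀) ≤ liminf (fun n => f (x n, y n)) atTop)
    (hcoer : ∀ x : H, ∃ δ > (0 : ℝ), ∃ α > (0 : ℝ), ∃ β : ℝ,
      ∀ x' ∈ Metric.ball x δ, ∀ y : X, α * ‖y‖ ^ 2 + β ≤ f (x', y))
    (g : X →L[ℝ] ℝ) : UpperSemicontinuous (partialConj f g) := by
  intro x₀ b hb
  obtain ⟨δ, hδ, α, hα, β, hcoer₀⟩ := hcoer x₀
  obtain ⟨b', hb'x₀, hb'b⟩ := EReal.exists_between_coe_real hb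
  by_contra hfreq
  obtain ⟨x, hx, hxb⟩ := exists_seq_forall_of_frequently
    ((not_eventually.1 hfreq).and_eventually (Metric.ball_mem_nhds x₀ hδ))
  have := coe_le_partialConj_of_tendsto hrefl hlsc hx hα (fun n => hcoer₀ _ (hxb n).2)
    (fun n => hb'b.trans_le (not_lt.1 (hxb n).1))
  exact this.not_gt hb'x₀

end PartialConjugate

theorem stmt13_general {H : Type*} [NormedAddCommGroup H]
    {X : Type*} [NormedAddCommGroup X] [NormedSpace ℝ X]
    (hrefl : ∀ y : ℕ → X, (∃ c : ℝ, ∀ n, ‖y n‖ ≤ c) →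
      ∃ (y₀ : X) (σ : ℕ → ℕ), StrictMono σ ∧
        ∀ g : X →L[ℝ] ℝ, Tendsto (fun n => g (y (σ n))) atTop (nhds (g y₀)))
    (f : H × X → ℝ)
    (hlsc : ∀ (x : ℕ → H) (x₀ : H) (y : ℕ → X) (y₀ : X),
      Tendsto x atTop (nhds x₀) →
      (∀ g : X →L[ℝ] ℝ, Tendsto (fun n => g (y n)) atTop (nhds (g y₀))) →
      f (x₀, y₀) ≤ liminf (fun n => f (x n, y n)) atTop)
    (hcoer : ∀ x : H, ∃ δ > (0 : ℝ), ∃ α > (0 : ℝ), ∃ β : ℝ,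
      ∀ x' ∈ Metric.ball x δ, ∀ y : X, α * ‖y‖ ^ 2 + β ≤ f (x', y)) :
    ∀ y' : X →L[ℝ] ℝ,
      (∀ x : H, (⨆ y : X, ((y' y - f (x, y) : ℝ) : EReal)) < ⊤) ∧
      UpperSemicontinuous (fun x : H => ⨆ y : X, ((y' y - f (x, y) : ℝ) : EReal)) := by
  intro g
  refine ⟨fun x => ?_, upperSemicontinuous_partialConj hrefl hlsc hcoer g⟩
  obtain ⟨δ, hδ, α, hα, β, hcoer_x⟩ := hcoer x
  exact partialConj_lt_top hα (hcoer_x x (Metric.mem_ball_self hδ)) g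

/-- Let `X` be a reflexive (separable) Banach space — encoded via the Eberlein–Šmulian
property that every bounded sequence has a weakly convergent subsequence — and
`f : H × X → ℝ` (H a Hilbert space) such that (i) `f` is sequentially lsc for strong
convergence in `H` and weak convergence in `X`, and (ii) `f` is locally uniformly
quadratically coercive in the second variable. Then for every `y* ∈ X*` the partial
conjugate `x ↦ f*(x, y*)` is finite-valued and upper semicontinuous on `H`. -/
theorem stmt13 {H : Type*} [NormedAddCommGroup H] [InnerProductSpace ℝ H] [CompleteSpace H]
    {X : Type*} [NormedAddCommGroup X] [NormedSpace ℝ X] [CompleteSpace X]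
    [TopologicalSpace.SeparableSpace X]
    (hrefl : ∀ y : ℕ → X, (∃ c : ℝ, ∀ n, ‖y n‖ ≤ c) →
      ∃ (y₀ : X) (σ : ℕ → ℕ), StrictMono σ ∧
        ∀ g : X →L[ℝ] ℝ, Tendsto (fun n => g (y (σ n))) atTop (nhds (g y₀)))
    (f : H × X → ℝ)
    (hlsc : ∀ (x : ℕ → H) (x₀ : H) (y : ℕ → X) (y₀ : X),
      Tendsto x atTop (nhds x₀) →
      (∀ g : X →L[ℝ] ℝ, Tendsto (fun n => g (y n)) atTop (nhds (g y₀))) →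
      f (x₀, y₀) ≤ liminf (fun n => f (x n, y n)) atTop)
    (hcoer : ∀ x : H, ∃ δ > (0 : ℝ), ∃ α > (0 : ℝ), ∃ β : ℝ,
      ∀ x' ∈ Metric.ball x δ, ∀ y : X, α * ‖y‖ ^ 2 + β ≤ f (x', y)) :
    ∀ y' : X →L[ℝ] ℝ,
      (∀ x : H, (⨆ y : X, ((y' y - f (x, y) : ℝ) : EReal)) < ⊤) ∧
      UpperSemicontinuous (fun x : H => ⨆ y : X, ((y' y - f (x, y) : ℝ) : EReal)) :=
  stmt13_general hrefl f hlsc hcoer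
end

section
/- Let X be a finite-dimensional normed space and define, for nonempty closed sets A, B ⊆ X, d_ρ(A,B) := max_{‖x‖ ≤ ρ} |dist(x,A) - dist(x,B)| and d̄(A,B) := ∫₀^∞ e^{-ρ} d_ρ(A,B) dρ. Then d̄ is a metric on the collection of nonempty closed subsets of X, and a sequence of nonempty closed sets (A_k) converges to a nonempty closed set A in the Painlevé–Kuratowski sense if and only if d̄(A_k, A) → 0. -/
/-!
Each `d_ρ(A,B)` is the supremum over a ball of the `2`-Lipschitz function
`x ↦ |dist(x,A) - dist(x,B)|`, so `d_ρ(A,B) ≤ |dist(0,A) - dist(0,B)| + 2ρ`: this makes `d̄`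
finite and provides the dominating function for convergence arguments. Since `d_ρ` is monotone
in `ρ`, `d̄(A,B) ≥ d_ρ(A,B) ∫_ρ^{ρ+1} e^{-s} ds`; hence `d̄(A,B) = 0` forces
`dist(·,A) = dist(·,B)`, and `d̄`-convergence forces pointwise convergence of the distance
functions. Conversely, the distance functions are `1`-Lipschitz, so pointwise convergence is
uniform on the compact balls, and dominated convergence gives `d̄ → 0`.
Painlevé–Kuratowski convergence is also equivalent to pointwise convergence of the distance
functions: the nontrivial inequality `liminf dist(x,A_k) ≥ dist(x,A)` holds because
near-minimizers of `dist(x,·)` on the `A_k` have a cluster point, which must lie in `A`.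
-/

open Filter Metric Set MeasureTheory Real Topology

/-- `d_ρ(A,B) = max_{‖x‖ ≤ ρ} |dist(x,A) - dist(x,B)|`. -/
noncomputable def setDistRho {X : Type*} [NormedAddCommGroup X]
    (ρ : ℝ) (A B : Set X) : ℝ :=
  ⨆ x : Metric.closedBall (0 : X) ρ,
    |Metric.infDist (x : X) A - Metric.infDist (x : X) B|

/-- The integrated set distance `d̄(A,B) = ∫₀^∞ e^{-ρ} d_ρ(A,B) dρ`. -/
noncomputable def intSetDist {X : Type*} [NormedAddCommGroup X] (A B : Set X) : ℝ :=
  ∫ ρ in Set.Ioi (0 : ℝ), Real.exp (-ρ) * setDistRho ρ A B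

section SetDistRho

variable {X : Type*} [NormedAddCommGroup X]

lemma lipschitzWith_infDist_sub_infDist (A B : Set X) :
    LipschitzWith 2 fun x => infDist x A - infDist x B := by
  simpa [one_add_one_eq_two] using (lipschitz_infDist_pt A).sub (lipschitz_infDist_pt B)

lemma abs_infDist_sub_infDist_le (A B : Set X) (x : X) :
    |infDist x A - infDist x B| ≤ |infDist 0 A - infDist 0 B| + 2 * ‖x‖ := by
  have hlip := (lipschitzWith_infDist_sub_infDist A B).dist_le_mul x 0
  rw [Real.dist_eq, dist_zero_right] at hlip
  push_cast at hlip
  linarith [abs_sub_abs_le_abs_sub (infDist x A - infDist x B) (infDist 0 A - infDist 0 B)]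

lemma setDistRho_nonneg (ρ : ℝ) (A B : Set X) : 0 ≤ setDistRho ρ A B :=
  Real.iSup_nonneg fun _ => abs_nonneg _

lemma abs_infDist_sub_infDist_le_setDistRho {ρ : ℝ} (A B : Set X) {x : X}
    (hx : x ∈ closedBall (0 : X) ρ) : |infDist x A - infDist x B| ≤ setDistRho ρ A B := by
  refine le_ciSup (f := fun x : closedBall (0 : X) ρ => |infDist (x : X) A - infDist (x : X) B|)
    ⟨|infDist 0 A - infDist 0 B| + 2 * ρ, ?_⟩ ⟨x, hx⟩
  rintro _ ⟨y, rfl⟩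
  have hy : ‖(y : X)‖ ≤ ρ := mem_closedBall_zero_iff.1 y.2
  linarith [abs_infDist_sub_infDist_le A B y]

lemma setDistRho_le_of_forall {ρ a : ℝ} {A B : Set X} (ha : 0 ≤ a)
    (h : ∀ x ∈ closedBall (0 : X) ρ, |infDist x A - infDist x B| ≤ a) :
    setDistRho ρ A B ≤ a :=
  Real.iSup_le (fun x => h x x.2) ha

lemma setDistRho_le {ρ : ℝ} (hρ : 0 ≤ ρ) (A B : Set X) :
    setDistRho ρ A B ≤ |infDist 0 A - infDist 0 B| + 2 * ρ :=
  setDistRho_le_of_forall (by positivity) fun x hx => by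
    linarith [abs_infDist_sub_infDist_le A B x, mem_closedBall_zero_iff.1 hx]

lemma setDistRho_mono (A B : Set X) : Monotone fun ρ => setDistRho ρ A B :=
  fun _ ρ' h => setDistRho_le_of_forall (setDistRho_nonneg ρ' A B) fun _ hx =>
    abs_infDist_sub_infDist_le_setDistRho A B (closedBall_subset_closedBall h hx)

lemma setDistRho_comm (ρ : ℝ) (A B : Set X) : setDistRho ρ A B = setDistRho ρ B A := by
  simp only [setDistRho, abs_sub_comm]

lemma setDistRho_triangle (ρ : ℝ) (A B C : Set X) :
    setDistRho ρ A C ≤ setDistRho ρ A B + setDistRho ρ B C :=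
  setDistRho_le_of_forall (add_nonneg (setDistRho_nonneg ρ A B) (setDistRho_nonneg ρ B C))
    fun _ hx => (abs_sub_le _ _ _).trans (add_le_add
      (abs_infDist_sub_infDist_le_setDistRho A B hx) (abs_infDist_sub_infDist_le_setDistRho B C hx))

lemma setDistRho_self (ρ : ℝ) (A : Set X) : setDistRho ρ A A = 0 :=
  le_antisymm (setDistRho_le_of_forall le_rfl fun _ _ => by simp) (setDistRho_nonneg ρ A A)

end SetDistRho

section IntSetDist

variable {X : Type*} [NormedAddCommGroup X]

lemma integrableOn_exp_neg_mul_const_add_two_mul (C : ℝ) :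
    IntegrableOn (fun ρ : ℝ => exp (-ρ) * (C + 2 * ρ)) (Ioi 0) := by
  have hlin : IntegrableOn (fun ρ : ℝ => exp (-ρ) * ρ ^ ((2 : ℝ) - 1)) (Ioi 0) :=
    GammaIntegral_convergent two_pos
  refine IntegrableOn.congr_fun (((integrableOn_exp_neg_Ioi 0).const_mul C).add
    (hlin.const_mul 2)) (fun ρ _ => ?_) measurableSet_Ioi
  norm_num
  ring

lemma norm_exp_neg_mul_setDistRho_le {ρ C : ℝ} (hρ : 0 ≤ ρ) {A B : Set X}
    (hC : |infDist 0 A - infDist 0 B| ≤ C) :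
    ‖exp (-ρ) * setDistRho ρ A B‖ ≤ exp (-ρ) * (C + 2 * ρ) := by
  rw [norm_mul, Real.norm_of_nonneg (exp_pos _).le,
    Real.norm_of_nonneg (setDistRho_nonneg ρ A B)]
  exact mul_le_mul_of_nonneg_left ((setDistRho_le hρ A B).trans (by linarith)) (exp_pos _).le

lemma integrableOn_exp_neg_mul_setDistRho (A B : Set X) :
    IntegrableOn (fun ρ => exp (-ρ) * setDistRho ρ A B) (Ioi 0) :=
  (integrableOn_exp_neg_mul_const_add_two_mul _).mono'
    ((measurable_exp.comp measurable_neg).mul (setDistRho_mono A B).measurable).aestronglyMeasurable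
    (ae_restrict_of_forall_mem measurableSet_Ioi fun _ hρ =>
      norm_exp_neg_mul_setDistRho_le (le_of_lt hρ) le_rfl)

lemma intSetDist_nonneg (A B : Set X) : 0 ≤ intSetDist A B :=
  setIntegral_nonneg measurableSet_Ioi fun ρ _ =>
    mul_nonneg (exp_pos _).le (setDistRho_nonneg ρ A B)

lemma intSetDist_comm (A B : Set X) : intSetDist A B = intSetDist B A := by
  simp only [intSetDist, setDistRho_comm _ A B]

lemma intSetDist_self (A : Set X) : intSetDist A A = 0 := by
  simp [intSetDist, setDistRho_self]

lemma intSetDist_triangle (A B C : Set X) :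
    intSetDist A C ≤ intSetDist A B + intSetDist B C := by
  rw [intSetDist, intSetDist, intSetDist, ← integral_add
    (integrableOn_exp_neg_mul_setDistRho A B) (integrableOn_exp_neg_mul_setDistRho B C)]
  refine setIntegral_mono_on (integrableOn_exp_neg_mul_setDistRho A C)
    ((integrableOn_exp_neg_mul_setDistRho A B).add (integrableOn_exp_neg_mul_setDistRho B C))
    measurableSet_Ioi fun ρ _ => ?_
  rw [← mul_add]
  exact mul_le_mul_of_nonneg_left (setDistRho_triangle ρ A B C) (exp_pos _).le

lemma exp_neg_sub_exp_neg_add_one_pos (ρ : ℝ) : 0 < exp (-ρ) - exp (-(ρ + 1)) :=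
  sub_pos.2 (exp_lt_exp.2 (by linarith))

lemma setDistRho_mul_le_intSetDist {ρ : ℝ} (hρ : 0 ≤ ρ) (A B : Set X) :
    setDistRho ρ A B * (exp (-ρ) - exp (-(ρ + 1))) ≤ intSetDist A B := by
  have hsub : Ioc ρ (ρ + 1) ⊆ Ioi 0 := fun s hs => hρ.trans_lt hs.1
  calc setDistRho ρ A B * (exp (-ρ) - exp (-(ρ + 1)))
      = ∫ s in Ioc ρ (ρ + 1), exp (-s) * setDistRho ρ A B := by
        rw [← intervalIntegral.integral_of_le (by linarith), intervalIntegral.integral_mul_const,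
          intervalIntegral.integral_comp_neg (fun s => exp s), integral_exp]
        ring
    _ ≤ ∫ s in Ioc ρ (ρ + 1), exp (-s) * setDistRho s A B :=
        setIntegral_mono_on
          (((integrableOn_exp_neg_Ioi ρ).mono_set Ioc_subset_Ioi_self).mul_const _)
          ((integrableOn_exp_neg_mul_setDistRho A B).mono_set hsub) measurableSet_Ioc
          fun s hs => mul_le_mul_of_nonneg_left (setDistRho_mono A B hs.1.le) (exp_pos _).le
    _ ≤ intSetDist A B :=
        setIntegral_mono_set (integrableOn_exp_neg_mul_setDistRho A B)
          (Eventually.of_forall fun s => mul_nonneg (exp_pos _).le (setDistRho_nonneg s A B))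
          hsub.eventuallyLE

lemma abs_infDist_sub_infDist_mul_le_intSetDist (A B : Set X) (x : X) :
    |infDist x A - infDist x B| * (exp (-‖x‖) - exp (-(‖x‖ + 1))) ≤ intSetDist A B :=
  (mul_le_mul_of_nonneg_right
      (abs_infDist_sub_infDist_le_setDistRho A B (mem_closedBall_zero_iff.2 le_rfl))
      (exp_neg_sub_exp_neg_add_one_pos ‖x‖).le).trans
    (setDistRho_mul_le_intSetDist (norm_nonneg x) A B)

lemma eq_of_intSetDist_eq_zero {A B : Set X} (hA : IsClosed A) (hAne : A.Nonempty)
    (hB : IsClosed B) (hBne : B.Nonempty) (h : intSetDist A B = 0) : A = B := by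
  have hdist (x : X) : infDist x A = infDist x B := by
    have hle := abs_infDist_sub_infDist_mul_le_intSetDist A B x
    rw [h] at hle
    exact sub_eq_zero.1 (abs_nonpos_iff.1
      (nonpos_of_mul_nonpos_left hle (exp_neg_sub_exp_neg_add_one_pos ‖x‖)))
  ext x
  rw [hA.mem_iff_infDist_zero hAne, hB.mem_iff_infDist_zero hBne, hdist]

lemma tendsto_infDist_of_tendsto_intSetDist {Ak : ℕ → Set X} {A : Set X}
    (h : Tendsto (fun k => intSetDist (Ak k) A) atTop (𝓝 0)) (x : X) :
    Tendsto (fun k => infDist x (Ak k)) atTop (𝓝 (infDist x A)) := by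
  set c := exp (-‖x‖) - exp (-(‖x‖ + 1))
  have hlim : Tendsto (fun k => intSetDist (Ak k) A / c) atTop (𝓝 0) := by
    simpa only [zero_div] using h.div_const c
  rw [tendsto_iff_dist_tendsto_zero]
  refine squeeze_zero (fun k => dist_nonneg) (fun k => ?_) hlim
  rw [Real.dist_eq, le_div_iff₀ (exp_neg_sub_exp_neg_add_one_pos ‖x‖)]
  exact abs_infDist_sub_infDist_mul_le_intSetDist _ _ x

end IntSetDist

theorem Equicontinuous.tendstoUniformlyOn_of_tendsto {ι X α : Type*} [TopologicalSpace X]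
    [UniformSpace α] {F : ι → X → α} {f : X → α} {l : Filter ι} (hF : Equicontinuous F)
    (h : ∀ x, Tendsto (F · x) l (𝓝 (f x))) {K : Set X} (hK : IsCompact K) :
    TendstoUniformlyOn F f l K := by
  have hcover : ⋃₀ {K : Set X | IsCompact K} = univ :=
    eq_univ_of_forall fun x => ⟨{x}, isCompact_singleton, rfl⟩
  have huniform := (EquicontinuousOn.tendsto_uniformOnFun_iff_pi (fun _ hK => hK) hcover
    (fun K _ => hF.equicontinuousOn K) l f).2 (tendsto_pi_nhds.2 h)
  exact UniformOnFun.tendsto_iff_tendstoUniformlyOn.1 huniform K hK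

section ProperSpace

variable {X : Type*} [NormedAddCommGroup X] [ProperSpace X]

lemma tendsto_setDistRho_of_tendsto_infDist {Ak : ℕ → Set X} {A : Set X}
    (h : ∀ x, Tendsto (fun k => infDist x (Ak k)) atTop (𝓝 (infDist x A))) (ρ : ℝ) :
    Tendsto (fun k => setDistRho ρ (Ak k) A) atTop (𝓝 0) := by
  have hunif : TendstoUniformlyOn (fun k x => infDist x (Ak k)) (fun x => infDist x A) atTop
      (closedBall 0 ρ) :=
    (LipschitzWith.uniformEquicontinuous _ 1 fun k => lipschitz_infDist_pt (Ak k)).equicontinuous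
      |>.tendstoUniformlyOn_of_tendsto h (isCompact_closedBall 0 ρ)
  refine tendsto_order.2 ⟨fun a ha => Eventually.of_forall fun k =>
    ha.trans_le (setDistRho_nonneg ρ _ A), fun ε hε => ?_⟩
  filter_upwards [Metric.tendstoUniformlyOn_iff.1 hunif (ε / 2) (half_pos hε)] with k hk
  refine (setDistRho_le_of_forall (half_pos hε).le fun x hx => ?_).trans_lt (half_lt_self hε)
  rw [abs_sub_comm, ← Real.dist_eq]
  exact (hk x hx).le

lemma tendsto_intSetDist_of_tendsto_infDist {Ak : ℕ → Set X} {A : Set X}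
    (h : ∀ x, Tendsto (fun k => infDist x (Ak k)) atTop (𝓝 (infDist x A))) :
    Tendsto (fun k => intSetDist (Ak k) A) atTop (𝓝 0) := by
  obtain ⟨M, hM⟩ : ∃ M, ∀ k, |infDist 0 (Ak k) - infDist 0 A| ≤ M := by
    have hzero := ((h 0).sub_const (infDist 0 A)).abs
    rw [sub_self, abs_zero] at hzero
    obtain ⟨M, hM⟩ := hzero.bddAbove_range
    exact ⟨M, fun k => hM (mem_range_self k)⟩
  have hdom := tendsto_integral_of_dominated_convergence (μ := volume.restrict (Ioi (0 : ℝ)))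
    (f := fun _ => 0) (fun ρ => exp (-ρ) * (M + 2 * ρ))
    (fun k => (integrableOn_exp_neg_mul_setDistRho (Ak k) A).aestronglyMeasurable)
    (integrableOn_exp_neg_mul_const_add_two_mul M)
    (fun k => ae_restrict_of_forall_mem measurableSet_Ioi fun _ hρ =>
      norm_exp_neg_mul_setDistRho_le (le_of_lt hρ) (hM k))
    (Eventually.of_forall fun ρ => by
      simpa using (tendsto_setDistRho_of_tendsto_infDist h ρ).const_mul (exp (-ρ)))
  rwa [integral_zero] at hdom

theorem tendsto_intSetDist_zero_iff_tendsto_infDist {Ak : ℕ → Set X} {A : Set X} :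
    Tendsto (fun k => intSetDist (Ak k) A) atTop (𝓝 0) ↔
      ∀ x, Tendsto (fun k => infDist x (Ak k)) atTop (𝓝 (infDist x A)) :=
  ⟨tendsto_infDist_of_tendsto_intSetDist, tendsto_intSetDist_of_tendsto_infDist⟩

end ProperSpace

section PainleveKuratowski

variable {X : Type*} [PseudoMetricSpace X]

-- In `ℝ` the `liminf` of a sequence tending to `∞` is the junk value `0`; for nonempty `A`
-- the first condition rules this case out.
def PainleveKuratowskiTendsto (Ak : ℕ → Set X) (A : Set X) : Prop :=
  (∀ x ∈ A, Tendsto (fun k => infDist x (Ak k)) atTop (𝓝 0)) ∧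
    ∀ x, liminf (fun k => infDist x (Ak k)) atTop = 0 → x ∈ A

lemma liminf_eq_zero_of_tendsto_comp {u : ℕ → ℝ} (hu : ∀ k, 0 ≤ u k) {φ : ℕ → ℕ}
    (hφ : StrictMono φ) (h : Tendsto (u ∘ φ) atTop (𝓝 0)) : liminf u atTop = 0 := by
  have hlower : {a | ∀ᶠ k in atTop, a ≤ u k} = Iic 0 := by
    ext a
    exact ⟨fun ha => ge_of_tendsto h (hφ.tendsto_atTop.eventually ha),
      fun ha => Eventually.of_forall fun k => le_trans ha (hu k)⟩
  rw [liminf_eq, hlower, csSup_Iic]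

lemma eventually_infDist_lt {Ak : ℕ → Set X} {A : Set X} (hA : A.Nonempty)
    (h : ∀ y ∈ A, Tendsto (fun k => infDist y (Ak k)) atTop (𝓝 0)) {x : X} {b : ℝ}
    (hb : infDist x A < b) : ∀ᶠ k in atTop, infDist x (Ak k) < b := by
  obtain ⟨y, hyA, hxy⟩ := (infDist_lt_iff hA).1 hb
  filter_upwards [(h y hyA).eventually_lt_const (sub_pos.2 hxy)] with k hk
  calc infDist x (Ak k) ≤ infDist y (Ak k) + dist x y := infDist_le_infDist_add_dist
    _ < b := by linarith

variable [ProperSpace X]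

lemma exists_mem_closedBall_liminf_infDist_eq_zero {Ak : ℕ → Set X}
    (hAk : ∀ k, (Ak k).Nonempty) {x : X} {r : ℝ} (h : ∃ᶠ k in atTop, infDist x (Ak k) < r) :
    ∃ z ∈ closedBall x r, liminf (fun k => infDist z (Ak k)) atTop = 0 := by
  obtain ⟨φ, hφ, hφr⟩ := extraction_of_frequently_atTop h
  choose y hyAk hxy using fun j => (infDist_lt_iff (hAk (φ j))).1 (hφr j)
  obtain ⟨z, hz, ψ, hψ, hyz⟩ :=
    (isCompact_closedBall x r).tendsto_subseq fun j => mem_closedBall'.2 (hxy j).le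
  refine ⟨z, hz, liminf_eq_zero_of_tendsto_comp (fun k => infDist_nonneg) (hφ.comp hψ) ?_⟩
  refine squeeze_zero (fun j => infDist_nonneg)
    (fun j => infDist_le_dist_of_mem (hyAk (ψ j))) ?_
  simpa using (tendsto_const_nhds (x := z)).dist hyz

lemma eventually_lt_infDist {Ak : ℕ → Set X} {A : Set X} (hAk : ∀ k, (Ak k).Nonempty)
    (h : ∀ x, liminf (fun k => infDist x (Ak k)) atTop = 0 → x ∈ A) {x : X} {b : ℝ}
    (hb : b < infDist x A) : ∀ᶠ k in atTop, b < infDist x (Ak k) := by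
  by_contra hfreq
  have hr : ∃ᶠ k in atTop, infDist x (Ak k) < (b + infDist x A) / 2 :=
    (not_eventually.1 hfreq).mono fun k hk => by linarith [not_lt.1 hk]
  obtain ⟨z, hz, hlim⟩ := exists_mem_closedBall_liminf_infDist_eq_zero hAk hr
  have hxz : infDist x A ≤ dist x z := infDist_le_dist_of_mem (h z hlim)
  linarith [mem_closedBall'.1 hz]

theorem painleveKuratowskiTendsto_iff_tendsto_infDist {Ak : ℕ → Set X} {A : Set X}
    (hAk : ∀ k, (Ak k).Nonempty) (hA : IsClosed A) (hAne : A.Nonempty) :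
    PainleveKuratowskiTendsto Ak A ↔
      ∀ x, Tendsto (fun k => infDist x (Ak k)) atTop (𝓝 (infDist x A)) := by
  refine ⟨fun ⟨hinner, houter⟩ x => tendsto_order.2
      ⟨fun b hb => eventually_lt_infDist hAk houter hb,
        fun b hb => eventually_infDist_lt hAne hinner hb⟩,
    fun h => ⟨fun x hx => ?_, fun x hx => ?_⟩⟩
  · simpa only [infDist_zero_of_mem hx] using h x
  · rw [(h x).liminf_eq] at hx
    exact (hA.mem_iff_infDist_zero hAne).2 hx

end PainleveKuratowski

/-- On a finite-dimensional normed space, the integrated set distance `d̄` is a metric on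
the collection of nonempty closed sets, and a sequence of nonempty closed sets converges
in the Painlevé–Kuratowski sense iff it converges with respect to `d̄`. -/
theorem stmt17 {X : Type*} [NormedAddCommGroup X] [NormedSpace ℝ X]
    [FiniteDimensional ℝ X] :
    (∀ A B : Set X, IsClosed A → A.Nonempty → IsClosed B → B.Nonempty →
        0 ≤ intSetDist A B ∧ (intSetDist A B = 0 ↔ A = B) ∧
        intSetDist A B = intSetDist B A) ∧
    (∀ A B C : Set X, IsClosed A → A.Nonempty → IsClosed B → B.Nonempty →
        IsClosed C → C.Nonempty → intSetDist A C ≤ intSetDist A B + intSetDist B C) ∧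
    (∀ (Ak : ℕ → Set X) (A : Set X), (∀ k, IsClosed (Ak k)) → (∀ k, (Ak k).Nonempty) →
        IsClosed A → A.Nonempty →
        (((∀ x ∈ A, Tendsto (fun k => Metric.infDist x (Ak k)) atTop (nhds 0)) ∧
            (∀ x : X, liminf (fun k => Metric.infDist x (Ak k)) atTop = 0 → x ∈ A)) ↔
          Tendsto (fun k => intSetDist (Ak k) A) atTop (nhds 0))) := by
  refine ⟨fun A B hA hAne hB hBne => ⟨intSetDist_nonneg A B, ?_, intSetDist_comm A B⟩,
    fun A B C _ _ _ _ _ _ => intSetDist_triangle A B C,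
    fun Ak A _ hAk hA hAne => ?_⟩
  · exact ⟨eq_of_intSetDist_eq_zero hA hAne hB hBne, fun hAB => hAB ▸ intSetDist_self A⟩
  · exact (painleveKuratowskiTendsto_iff_tendsto_infDist hAk hA hAne).trans
      tendsto_intSetDist_zero_iff_tendsto_infDist.symm
end
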